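/- Let p ≥ 3 be a prime, s ≥ 1, n ≥ 0 integers, and b an integer with 0 ≤ b < p(n+1) and p ∤ b. If p^{s(n+1)/2−1} > n+1, then M_{p,s,n}(b) < 0. -/

import Mathlib

open Polynomial Finset

/-- The polynomial `T_{p,s,n}(q) = ∏_{j=0}^n ∏_{k=1}^{p-1} (1 - q^{pj+k})^s`. -/
noncomputable def borweinPoly (p s n : ℕ) : Polynomial ℤ :=
  ∏ j ∈ Finset.range (n + 1), ∏ k ∈ Finset.Icc 1 (p - 1),
    (1 - Polynomial.X ^ (p * j + k)) ^ s

/-- The coefficient `t_{i,p,s}` of `q^i` in `T_{p,s,n}(q)`. -/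
noncomputable def borweinCoeff (p s n i : ℕ) : ℤ := (borweinPoly p s n).coeff i

/-- The degree `d_{p,s,n} = p(p-1)s(n+1)^2/2` of `T_{p,s,n}`. -/
def borweinDeg (p s n : ℕ) : ℕ := p * (p - 1) * s * (n + 1) ^ 2 / 2

/-- `M_{p,s,n}(b) = ∑_{ℓ ≥ 0} t_{b + ℓ·p(n+1), p, s}`, a finite sum since the
coefficients vanish beyond the degree `d_{p,s,n}`. -/
noncomputable def borweinM (p s n b : ℕ) : ℤ :=
  ∑ l ∈ Finset.range (borweinDeg p s n + 1), borweinCoeff p s n (b + l * (p * (n + 1)))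

/-!
Write `N = p(n+1)` and let `ω` be a primitive `N`-th root of unity. The roots of unity filter gives
`N · M_{p,s,n}(b) = ∑_{j<N} ω^{-jb} T(ω^j)`, and `T(q) = ∏_{i<N, p∤i} (1 - q^i)^s`. If `ζ` has order
`d ∣ N`, then `T(ζ) = 0` when `p ∤ d` (the factor `i = d` vanishes), while for `p ∣ d` periodicity
reduces `T(ζ)` to `(∏_{r<d, p∤r} (1 - ζ^r))^{sN/d} = p^{sN/d}`. The `p - 1` primitive `p`-th roots
contribute `-p^{s(n+1)}` since `p ∤ b`; every other `ω^j` has order `pe` with `e ≥ 2`, so its term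
is at most `p^{s⌊(n+1)/2⌋}` in absolute value, and the hypothesis makes these `N` terms too small to
cancel `-p^{s(n+1)}`.
-/

namespace Finset

theorem prod_range_mul_eq_pow_of_periodic {M : Type*} [CommMonoid M] {f : ℕ → M} {d : ℕ}
    (hf : Function.Periodic f d) (m : ℕ) :
    ∏ i ∈ range (m * d), f i = (∏ i ∈ range d, f i) ^ m := by
  induction m with
  | zero => simp
  | succ m ih =>
    rw [add_one_mul, prod_range_add, ih, pow_succ]
    congr 1
    refine prod_congr rfl fun i _ => ?_
    rw [add_comm]
    exact hf.nat_mul m i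

theorem sum_range_mul_ite_dvd {M : Type*} [AddCommMonoid M] (h : ℕ → M) (K : ℕ) {N : ℕ}
    (hN : 0 < N) :
    ∑ m ∈ range (K * N), (if N ∣ m then h m else 0) = ∑ l ∈ range K, h (l * N) := by
  induction K with
  | zero => simp
  | succ K ih =>
    rw [add_one_mul, sum_range_add, ih, sum_range_succ]
    congr 1
    rw [sum_eq_single 0]
    · simp
    · intro m hm hm0
      rw [if_neg]
      rw [Nat.dvd_add_right (dvd_mul_left N K)]
      exact Nat.not_dvd_of_pos_of_lt (Nat.pos_of_ne_zero hm0) (mem_range.mp hm)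
    · simp [hN]

theorem prod_range_mul_filter_not_dvd {M : Type*} [CommMonoid M] (f : ℕ → M) (p m : ℕ) :
    ∏ i ∈ range (p * m) with ¬ p ∣ i, f i = ∏ j ∈ range m, ∏ k ∈ Icc 1 (p - 1), f (p * j + k) := by
  have hunits : (range p).filter (¬ p ∣ ·) = Icc 1 (p - 1) := by
    ext k
    simp only [mem_filter, mem_range, mem_Icc]
    constructor
    · rintro ⟨hk, hpk⟩
      have : k ≠ 0 := by rintro rfl; exact hpk (dvd_zero p)
      omega
    · rintro ⟨hk1, hk⟩
      exact ⟨by omega, Nat.not_dvd_of_pos_of_lt hk1 (by omega)⟩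
  induction m with
  | zero => simp
  | succ m ih =>
    rw [prod_range_succ, ← ih, mul_add_one, prod_filter, prod_range_add, ← prod_filter, ← hunits,
      prod_filter, prod_filter]
    congr 1
    refine prod_congr rfl fun k _ => ?_
    simp only [Nat.dvd_add_right (dvd_mul_right p m)]

end Finset

namespace IsPrimitiveRoot

variable {R : Type*} [CommRing R] [IsDomain R]

theorem sum_pow_pow_eq_ite {ω : R} {N : ℕ} (hω : IsPrimitiveRoot ω N) (k : ℕ) :
    ∑ j ∈ range N, (ω ^ k) ^ j = if N ∣ k then (N : R) else 0 := by
  split_ifs with hk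
  · simp [(hω.pow_eq_one_iff_dvd k).mpr hk]
  · have hne : ω ^ k - 1 ≠ 0 := sub_ne_zero.mpr fun h => hk ((hω.pow_eq_one_iff_dvd k).mp h)
    refine (mul_eq_zero.mp ?_).resolve_right hne
    rw [geom_sum_mul, ← pow_mul, mul_comm, pow_mul, hω.pow_eq_one, one_pow, sub_self]

/-- The roots of unity filter; `(ω ^ j) ^ (N - b)` stands for `ω ^ (-j b)`. -/
theorem sum_pow_mul_eval_pow {ω : R} {N : ℕ} (hω : IsPrimitiveRoot ω N) (f : R[X]) {b K : ℕ}
    (hb : b < N) (hf : f.natDegree < b + K * N) :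
    ∑ j ∈ range N, (ω ^ j) ^ (N - b) * f.eval (ω ^ j) =
      N * ∑ l ∈ range K, f.coeff (b + l * N) := by
  have hN : 0 < N := by omega
  calc ∑ j ∈ range N, (ω ^ j) ^ (N - b) * f.eval (ω ^ j)
      = ∑ i ∈ range (b + K * N), f.coeff i * ∑ j ∈ range N, (ω ^ (N - b + i)) ^ j := by
        simp only [eval_eq_sum_range' hf, mul_sum, ← pow_mul, pow_add]
        rw [sum_comm]
        refine sum_congr rfl fun i _ => sum_congr rfl fun j _ => ?_
        ring
    _ = ∑ i ∈ range (b + K * N), if N ∣ N - b + i then f.coeff i * N else 0 := by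
        simp only [hω.sum_pow_pow_eq_ite, mul_ite, mul_zero]
    _ = ∑ m ∈ range (K * N), if N ∣ m then f.coeff (b + m) * N else 0 := by
        rw [sum_range_add, sum_eq_zero, zero_add]
        · refine sum_congr rfl fun m _ => ?_
          rw [show N - b + (b + m) = N + m by omega]
          simp only [Nat.dvd_add_right dvd_rfl]
        · intro i hi
          rw [if_neg (Nat.not_dvd_of_pos_of_lt (by omega) (by simp at hi; omega))]
    _ = N * ∑ l ∈ range K, f.coeff (b + l * N) := by
        rw [sum_range_mul_ite_dvd _ K hN, ← sum_mul, mul_comm]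

theorem prod_Ico_one_sub_pow {ζ : R} {d : ℕ} (hζ : IsPrimitiveRoot ζ d) (hd : 0 < d) :
    ∏ r ∈ Ico 1 d, (1 - ζ ^ r) = d := by
  obtain ⟨m, rfl⟩ := Nat.exists_eq_add_of_lt hd
  rw [zero_add] at hζ ⊢
  rw [prod_Ico_eq_prod_range, Nat.add_sub_cancel]
  simp only [add_comm 1]
  push_cast
  exact hζ.prod_one_sub_pow_eq_order

/-- The factors of `∏_{0<r<d} (1 - ζ^r) = d` with `p ∣ r` multiply to
`∏_{0<t<d/p} (1 - (ζ^p)^t) = d/p`. -/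
theorem prod_filter_not_dvd_one_sub_pow [CharZero R] {ζ : R} {d p : ℕ}
    (hζ : IsPrimitiveRoot ζ d) (hd : 0 < d) (hpd : p ∣ d) :
    ∏ r ∈ range d with ¬ p ∣ r, (1 - ζ ^ r) = p := by
  obtain ⟨e, rfl⟩ := hpd
  have hp : 0 < p := Nat.pos_of_mul_pos_right hd
  have he : 0 < e := Nat.pos_of_mul_pos_left hd
  have hmult : ∏ r ∈ Ico 1 (p * e) with p ∣ r, (1 - ζ ^ r) = e := by
    have himage : (Ico 1 (p * e)).filter (p ∣ ·) = (Ico 1 e).image (p * ·) := by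
      ext r
      simp only [mem_filter, mem_Ico, mem_image]
      constructor
      · rintro ⟨⟨hr1, hr⟩, t, rfl⟩
        exact ⟨t, ⟨Nat.pos_of_mul_pos_left hr1, Nat.lt_of_mul_lt_mul_left hr⟩, rfl⟩
      · rintro ⟨t, ⟨ht1, ht⟩, rfl⟩
        exact ⟨⟨Nat.mul_pos hp ht1, Nat.mul_lt_mul_of_pos_left ht hp⟩, dvd_mul_right p t⟩
    rw [himage, prod_image fun _ _ _ _ h => Nat.eq_of_mul_eq_mul_left hp h]
    simp only [pow_mul]
    exact (hζ.pow hd rfl).prod_Ico_one_sub_pow he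
  have hunits : (range (p * e)).filter (¬ p ∣ ·) = (Ico 1 (p * e)).filter (¬ p ∣ ·) := by
    ext r
    simp only [mem_filter, mem_range, mem_Ico, and_congr_left_iff]
    intro hpr
    have : r ≠ 0 := by rintro rfl; exact hpr (dvd_zero p)
    omega
  have hall := hζ.prod_Ico_one_sub_pow hd
  rw [← prod_filter_not_mul_prod_filter (p := (p ∣ ·)), hmult, ← hunits] at hall
  refine mul_right_cancel₀ (Nat.cast_ne_zero.mpr he.ne') ?_
  rw [hall]
  push_cast
  ring

theorem prod_filter_not_dvd_one_sub_pow_pow [CharZero R] {ζ : R} {d p N : ℕ}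
    (hζ : IsPrimitiveRoot ζ d) (hd : 0 < d) (hpd : p ∣ d) (hdN : d ∣ N) (s : ℕ) :
    ∏ i ∈ range N with ¬ p ∣ i, (1 - ζ ^ i) ^ s = (p : R) ^ (s * (N / d)) := by
  have hperiodic : Function.Periodic (fun i => if ¬ p ∣ i then (1 - ζ ^ i) ^ s else 1) d := by
    intro i
    simp only [Nat.dvd_add_left hpd, pow_add, hζ.pow_eq_one, mul_one]
  obtain ⟨m, rfl⟩ := hdN
  rw [Nat.mul_div_cancel_left m hd, mul_comm d, prod_filter,
    prod_range_mul_eq_pow_of_periodic hperiodic, ← prod_filter, prod_pow,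
    hζ.prod_filter_not_dvd_one_sub_pow hd hpd, pow_mul]

end IsPrimitiveRoot

theorem prod_filter_not_dvd_one_sub_pow_eq_zero {R : Type*} [CommRing R] {ζ : R} {d p N s : ℕ}
    (hζ : ζ ^ d = 1) (hdN : d < N) (hpd : ¬ p ∣ d) (hs : s ≠ 0) :
    ∏ i ∈ range N with ¬ p ∣ i, (1 - ζ ^ i) ^ s = 0 :=
  prod_eq_zero (mem_filter.mpr ⟨mem_range.mpr hdN, hpd⟩) (by rw [hζ, sub_self, zero_pow hs])

theorem sum_range_sum_Icc_mul_two (p n : ℕ) :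
    (∑ j ∈ range (n + 1), ∑ k ∈ Icc 1 (p - 1), (p * j + k)) * 2 = p * (p - 1) * (n + 1) ^ 2 := by
  have hgauss : (∑ k ∈ Icc 1 (p - 1), k) * 2 = p * (p - 1) := by
    rw [← sum_range_id_mul_two]
    congr 1
    refine sum_subset (fun k hk => by simp at hk ⊢; omega) fun k hk hk' => ?_
    simp at hk hk'
    omega
  have hrow : ∀ j, (∑ k ∈ Icc 1 (p - 1), (p * j + k)) * 2 = p * (p - 1) * (2 * j + 1) := by
    intro j
    rw [sum_add_distrib, add_mul, hgauss, sum_const, Nat.card_Icc, smul_eq_mul,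
      Nat.add_sub_cancel]
    ring
  induction n with
  | zero => simpa using hrow 0
  | succ n ih => rw [sum_range_succ, add_mul, ih, hrow]; ring

section Borwein

variable {p s n : ℕ}

theorem borweinPoly_eq_prod_filter :
    borweinPoly p s n = ∏ i ∈ range (p * (n + 1)) with ¬ p ∣ i, (1 - X ^ i) ^ s := by
  rw [borweinPoly, prod_range_mul_filter_not_dvd]

theorem aeval_borweinPoly {A : Type*} [CommRing A] (ζ : A) :
    aeval ζ (borweinPoly p s n) = ∏ i ∈ range (p * (n + 1)) with ¬ p ∣ i, (1 - ζ ^ i) ^ s := by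
  simp [borweinPoly_eq_prod_filter]

theorem natDegree_borweinPoly_le : (borweinPoly p s n).natDegree ≤ borweinDeg p s n := by
  have hfactor : ∀ m, ((1 - X ^ m) ^ s : ℤ[X]).natDegree ≤ s * m := fun m =>
    natDegree_pow_le_of_le s ((natDegree_sub_le _ _).trans (by simp))
  refine (natDegree_prod_le _ _).trans <| (sum_le_sum fun j _ =>
    (natDegree_prod_le _ _).trans (sum_le_sum fun k _ => hfactor _)).trans ?_
  rw [borweinDeg, Nat.le_div_iff_mul_le two_pos]
  simp only [← mul_sum]
  rw [mul_assoc, sum_range_sum_Icc_mul_two]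
  apply le_of_eq
  ring

theorem aeval_borweinPoly_of_isPrimitiveRoot {R : Type*} [CommRing R] [IsDomain R] [CharZero R]
    {ζ : R} (hζ : IsPrimitiveRoot ζ p) (hp : 0 < p) :
    aeval ζ (borweinPoly p s n) = (p : R) ^ (s * (n + 1)) := by
  rw [aeval_borweinPoly, hζ.prod_filter_not_dvd_one_sub_pow_pow hp dvd_rfl (dvd_mul_right p _),
    Nat.mul_div_cancel_left _ hp]

theorem aeval_one_borweinPoly {R : Type*} [CommRing R] (hp : 2 ≤ p) (hs : s ≠ 0) :
    aeval (1 : R) (borweinPoly p s n) = 0 := by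
  rw [aeval_borweinPoly]
  refine prod_filter_not_dvd_one_sub_pow_eq_zero (d := 1) (one_pow 1) ?_ ?_ hs
  · nlinarith
  · rw [Nat.dvd_one]
    omega

theorem norm_aeval_borweinPoly_le {ζ : ℂ} (hs : s ≠ 0) (hζN : ζ ^ (p * (n + 1)) = 1)
    (hζp : ζ ^ p ≠ 1) : ‖aeval ζ (borweinPoly p s n)‖ ≤ (p : ℝ) ^ (s * ((n + 1) / 2)) := by
  have hp : 0 < p := Nat.pos_of_ne_zero fun h => hζp (by rw [h, pow_zero])
  have hN : 0 < p * (n + 1) := by positivity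
  have hdN : orderOf ζ ∣ p * (n + 1) := orderOf_dvd_of_pow_eq_one hζN
  have hd : 0 < orderOf ζ := Nat.pos_of_dvd_of_pos hdN hN
  rw [aeval_borweinPoly]
  by_cases hpd : p ∣ orderOf ζ
  · obtain ⟨e, he⟩ := hpd
    have he2 : 2 ≤ e := by
      have he0 : e ≠ 0 := by rintro rfl; omega
      have he1 : e ≠ 1 := by rintro rfl; exact hζp (by rw [← mul_one p, ← he, pow_orderOf_eq_one])
      omega
    rw [(IsPrimitiveRoot.orderOf ζ).prod_filter_not_dvd_one_sub_pow_pow hd ⟨e, he⟩ hdN, norm_pow,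
      Complex.norm_natCast, he, Nat.mul_div_mul_left _ _ hp]
    gcongr
    exact_mod_cast hp
  · have hdN' : orderOf ζ < p * (n + 1) :=
      (Nat.le_of_dvd hN hdN).lt_of_ne fun h => hpd (h ▸ dvd_mul_right p _)
    rw [prod_filter_not_dvd_one_sub_pow_eq_zero (pow_orderOf_eq_one ζ) hdN' hpd hs, norm_zero]
    positivity

theorem sum_pow_mul_aeval_borweinPoly {R : Type*} [CommRing R] [IsDomain R] [CharZero R]
    {ξ : R} (hp : p.Prime) (hξ : IsPrimitiveRoot ξ p) (hs : s ≠ 0) {k : ℕ} (hk : ¬ p ∣ k) :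
    ∑ u ∈ range p, (ξ ^ u) ^ k * aeval (ξ ^ u) (borweinPoly p s n) = -(p : R) ^ (s * (n + 1)) := by
  have hterm : ∀ u ∈ range p, (ξ ^ u) ^ k * aeval (ξ ^ u) (borweinPoly p s n) =
      (ξ ^ k) ^ u * (p : R) ^ (s * (n + 1)) - if u = 0 then (p : R) ^ (s * (n + 1)) else 0 := by
    intro u hu
    rcases Nat.eq_zero_or_pos u with rfl | hu0
    · simp [aeval_one_borweinPoly hp.two_le hs]
    · have hcop : u.Coprime p := (Nat.coprime_of_lt_prime hu0.ne' (mem_range.mp hu) hp).symm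
      rw [aeval_borweinPoly_of_isPrimitiveRoot (hξ.pow_of_coprime u hcop) hp.pos, if_neg hu0.ne',
        sub_zero, ← pow_mul, ← pow_mul, mul_comm u]
  have hξk : IsPrimitiveRoot (ξ ^ k) p :=
    hξ.pow_of_coprime k ((Nat.Prime.coprime_iff_not_dvd hp).mpr hk).symm
  rw [sum_congr rfl hterm, sum_sub_distrib, ← sum_mul, hξk.geom_sum_eq_zero hp.one_lt,
    sum_ite_eq' (range p) 0, if_pos (mem_range.mpr hp.pos)]
  ring

theorem sum_filter_dvd_pow_mul_aeval_borweinPoly {ω : ℂ} (hω : IsPrimitiveRoot ω (p * (n + 1)))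
    (hp : p.Prime) (hs : s ≠ 0) {k : ℕ} (hk : ¬ p ∣ k) :
    ∑ j ∈ range (p * (n + 1)) with n + 1 ∣ j, (ω ^ j) ^ k * aeval (ω ^ j) (borweinPoly p s n) =
      -(p : ℂ) ^ (s * (n + 1)) := by
  have hξ : IsPrimitiveRoot (ω ^ (n + 1)) p :=
    hω.pow (Nat.mul_pos hp.pos n.succ_pos) (mul_comm _ _)
  rw [sum_filter, sum_range_mul_ite_dvd _ p n.succ_pos, ← sum_pow_mul_aeval_borweinPoly hp hξ hs hk]
  simp only [← pow_mul, mul_comm]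

theorem norm_sum_filter_not_dvd_pow_mul_aeval_borweinPoly_le {ω : ℂ}
    (hω : IsPrimitiveRoot ω (p * (n + 1))) (hp : 0 < p) (hs : s ≠ 0) (k : ℕ) :
    ‖∑ j ∈ range (p * (n + 1)) with ¬ n + 1 ∣ j, (ω ^ j) ^ k * aeval (ω ^ j) (borweinPoly p s n)‖ ≤
      (p * (n + 1) : ℕ) * (p : ℝ) ^ (s * ((n + 1) / 2)) := by
  have hN : p * (n + 1) ≠ 0 := (Nat.mul_pos hp n.succ_pos).ne'
  refine (norm_sum_le _ _).trans <|
    (sum_le_card_nsmul _ _ ((p : ℝ) ^ (s * ((n + 1) / 2))) fun j hj => ?_).trans ?_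
  · have hjp : (ω ^ j) ^ p ≠ 1 := by
      rw [← pow_mul, Ne, hω.pow_eq_one_iff_dvd, mul_comm j, Nat.mul_dvd_mul_iff_left hp]
      exact (mem_filter.mp hj).2
    rw [norm_mul, norm_pow, norm_pow, hω.norm'_eq_one hN, one_pow, one_pow, one_mul]
    exact norm_aeval_borweinPoly_le hs (by rw [← pow_mul, mul_comm, pow_mul, hω.pow_eq_one,
      one_pow]) hjp
  · rw [nsmul_eq_mul]
    gcongr
    exact_mod_cast (card_filter_le _ _).trans (card_range _).le

end Borwein

theorem natCast_mul_borweinM_le {p s n b : ℕ} (hp : p.Prime) (hs : s ≠ 0) (hb : b < p * (n + 1))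
    (hpb : ¬ p ∣ b) :
    ((p * (n + 1) : ℕ) : ℝ) * borweinM p s n b ≤
      -(p : ℝ) ^ (s * (n + 1)) + (p * (n + 1) : ℕ) * (p : ℝ) ^ (s * ((n + 1) / 2)) := by
  have hN : p * (n + 1) ≠ 0 := (Nat.mul_pos hp.pos n.succ_pos).ne'
  obtain ⟨ω, hω⟩ : ∃ ω : ℂ, IsPrimitiveRoot ω (p * (n + 1)) :=
    ⟨_, Complex.isPrimitiveRoot_exp _ hN⟩
  have hfilter := hω.sum_pow_mul_eval_pow ((borweinPoly p s n).map (algebraMap ℤ ℂ)) hb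
    (K := borweinDeg p s n + 1) ((natDegree_map_le.trans natDegree_borweinPoly_le).trans_lt
      (by nlinarith))
  simp only [eval_map_algebraMap, coeff_map, eq_intCast, ← Int.cast_sum] at hfilter
  change _ = _ * ((borweinM p s n b : ℤ) : ℂ) at hfilter
  have hpNb : ¬ p ∣ p * (n + 1) - b := fun h => hpb <| by
    simpa [Nat.sub_sub_self hb.le] using Nat.dvd_sub (dvd_mul_right p (n + 1)) h
  rw [← sum_filter_add_sum_filter_not _ (n + 1 ∣ ·),
    sum_filter_dvd_pow_mul_aeval_borweinPoly hω hp hs hpNb] at hfilter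
  have hre := congrArg Complex.re hfilter
  rw [Complex.add_re, ← Complex.ofReal_natCast, ← Complex.ofReal_pow, ← Complex.ofReal_neg,
    Complex.ofReal_re, ← Complex.ofReal_intCast, ← Complex.ofReal_natCast, ← Complex.ofReal_mul,
    Complex.ofReal_re] at hre
  linarith [(Complex.re_le_norm _).trans
    (norm_sum_filter_not_dvd_pow_mul_aeval_borweinPoly_le hω hp.pos hs (p * (n + 1) - b))]

theorem natCast_mul_pow_lt_pow_of_lt_rpow {p s n : ℕ} (hp : 1 < p)
    (h : (n : ℝ) + 1 < (p : ℝ) ^ ((s : ℝ) * ((n : ℝ) + 1) / 2 - 1)) :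
    ((p * (n + 1) : ℕ) : ℝ) * (p : ℝ) ^ (s * ((n + 1) / 2)) < (p : ℝ) ^ (s * (n + 1)) := by
  have hp1 : (1 : ℝ) < p := by exact_mod_cast hp
  have hp0 : (0 : ℝ) < p := by positivity
  set m := s * (n + 1) - s * ((n + 1) / 2) with hm_def
  have hsplit : s * (n + 1) = s * ((n + 1) / 2) + m := by
    have := Nat.mul_le_mul_left s (Nat.div_le_self (n + 1) 2)
    omega
  have hm : (s : ℝ) * ((n : ℝ) + 1) / 2 ≤ m := by
    have : s * (n + 1) ≤ 2 * m := by
      rw [hm_def, ← Nat.mul_sub, mul_left_comm]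
      exact Nat.mul_le_mul_left s (by omega)
    rw [div_le_iff₀ two_pos]
    exact_mod_cast (mul_comm m 2 ▸ this)
  have hlt : (p : ℝ) * (n + 1) < (p : ℝ) ^ m := by
    rw [Real.rpow_sub_one hp0.ne', lt_div_iff₀ hp0] at h
    calc (p : ℝ) * (n + 1) = (n + 1) * p := mul_comm _ _
      _ < (p : ℝ) ^ ((s : ℝ) * ((n : ℝ) + 1) / 2) := h
      _ ≤ (p : ℝ) ^ (m : ℝ) := Real.rpow_le_rpow_of_exponent_le hp1.le hm
      _ = (p : ℝ) ^ m := Real.rpow_natCast _ _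
  rw [hsplit, pow_add, mul_comm]
  push_cast
  exact mul_lt_mul_of_pos_left hlt (by positivity)

theorem stmt_2_general (p s n b : ℕ) (hp : p.Prime) (hs : 1 ≤ s)
    (hb : b < p * (n + 1)) (hpb : ¬ p ∣ b)
    (hgt : (p : ℝ) ^ (((s : ℝ) * ((n : ℝ) + 1)) / 2 - 1) > (n : ℝ) + 1) :
    borweinM p s n b < 0 := by
  have hN : (0 : ℝ) < ((p * (n + 1) : ℕ) : ℝ) := by exact_mod_cast Nat.mul_pos hp.pos n.succ_pos
  have hneg : ((p * (n + 1) : ℕ) : ℝ) * borweinM p s n b < 0 := by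
    linarith [natCast_mul_borweinM_le hp (Nat.one_le_iff_ne_zero.mp hs) hb hpb,
      natCast_mul_pow_lt_pow_of_lt_rpow hp.one_lt hgt]
  exact_mod_cast neg_of_mul_neg_right hneg hN.le

theorem stmt_2 (p s n b : ℕ) (hp : p.Prime) (hp3 : 3 ≤ p) (hs : 1 ≤ s)
    (hb : b < p * (n + 1)) (hpb : ¬ p ∣ b)
    (hgt : (p : ℝ) ^ (((s : ℝ) * ((n : ℝ) + 1)) / 2 - 1) > (n : ℝ) + 1) :
    borweinM p s n b < 0 :=
  stmt_2_general p s n b hp hs hb hpb hgt
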